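/- Let $k$ be a field, $R = k[x_0,\dots,x_r]$, and $I \subseteq R$ a homogeneous ideal. Then for every integer $m \ge 0$, $\dim_k (R/I)_m = \sum_{i=0}^{\infty} \dim_k \big(k[x_1,\dots,x_r]/K_i(I)\big)_{m-i}$, where the sum is finite since $(\bar R/K_i(I))_{m-i} = 0$ for $i > m$. -/

import Mathlib

open MvPolynomial

variable {k : Type*} [Field k] {r : ℕ}

/-- The `i`-th partial elimination ideal of `I ⊆ k[x₀,…,x_r]`, defined as the
ideal of `k[x₁,…,x_r]` generated by the coefficients of `x₀^i` in elements of
`I` of `x₀`-degree at most `i` (via the identification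
`k[x₀,…,x_r] ≃ (k[x₁,…,x_r])[x₀]` given by `finSuccEquiv`; since this set of
coefficients is itself an ideal, the span equals it). -/
noncomputable def pelIdeal (I : Ideal (MvPolynomial (Fin (r + 1)) k)) (i : ℕ) :
    Ideal (MvPolynomial (Fin r) k) :=
  Ideal.span {q | ∃ f ∈ I, (finSuccEquiv k r f).natDegree ≤ i ∧
    (finSuccEquiv k r f).coeff i = q}

/-- The Hilbert function of `k[x₁,…,x_n]/J` in degree `m`. -/
noncomputable def hilbFn (n : ℕ) (J : Ideal (MvPolynomial (Fin n) k)) (m : ℕ) : ℕ :=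
  Module.finrank k (homogeneousSubmodule (Fin n) k m) -
    Module.finrank k
      (homogeneousSubmodule (Fin n) k m ⊓ Submodule.restrictScalars k J :
        Submodule k (MvPolynomial (Fin n) k))

/-! Filter the degree-`m` piece `W` of a graded subspace of `k[x₀,…,x_r]` by `x₀`-degree,
`W_i = {f ∈ W | deg_{x₀} f < i}`. Taking the coefficient of `x₀ ^ i` is a linear map on `W_{i+1}`
with kernel `W_i`, so rank–nullity gives `dim W = ∑_{i ≤ m} dim coeff_i(W_{i+1})`. When `W = I_m`
for a homogeneous ideal `I`, `coeff_i(W_{i+1})` is exactly `K_i(I)_{m-i}`: the degree-`m` part of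
an element of `I` of `x₀`-degree `≤ i` still lies in `I`, and its `x₀ ^ i` coefficient is the
degree-`(m-i)` part of the original one. Doing this for `I` and for the whole ring and subtracting
gives the formula. -/

section Filtration

variable {K M N : Type*} [DivisionRing K] [AddCommGroup M] [Module K M] [AddCommGroup N]
  [Module K N]

open Module

theorem Submodule.finrank_map_add_finrank_inf_ker (f : M →ₗ[K] N) (p : Submodule K M)
    [FiniteDimensional K p] :
    finrank K (p.map f) + finrank K (p ⊓ LinearMap.ker f : Submodule K M) = finrank K p := by
  have h := (f.domRestrict p).finrank_range_add_finrank_ker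
  rwa [LinearMap.range_domRestrict, LinearMap.ker_domRestrict,
    ← Submodule.finrank_map_subtype_eq, Submodule.map_comap_subtype] at h

theorem Submodule.finrank_inf_eq_sum_finrank_map (F : ℕ → Submodule K M)
    (φ : ℕ → M →ₗ[K] N) (hF₀ : F 0 = ⊥) (hF : ∀ j, F (j + 1) ⊓ LinearMap.ker (φ j) = F j)
    (W : Submodule K M) [FiniteDimensional K W] (i : ℕ) :
    finrank K (W ⊓ F i : Submodule K M) =
      ∑ j ∈ Finset.range i, finrank K ((W ⊓ F (j + 1)).map (φ j)) := by
  induction i with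
  | zero => simp [hF₀]
  | succ i ih =>
    rw [Finset.sum_range_succ, ← ih, ← (W ⊓ F (i + 1)).finrank_map_add_finrank_inf_ker (φ i),
      inf_assoc, hF, add_comm]

end Filtration

theorem Finsupp.degree_cons {n : ℕ} (y : ℕ) (s : Fin n →₀ ℕ) :
    (Finsupp.cons y s).degree = y + s.degree := by
  simp [Finsupp.degree_eq_sum, Fin.sum_univ_succ]

namespace MvPolynomial

instance {σ R : Type*} [Finite σ] [CommSemiring R] (m : ℕ) :
    Module.Finite R (homogeneousSubmodule σ R m) :=
  Module.Finite.iff_fg.mpr (homogeneousSubmodule_fg σ R m)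

section FinSucc

variable {R : Type*} [CommSemiring R] {n : ℕ}

theorem coeff_finSuccEquiv_homogeneousComponent {d i : ℕ} (hid : i ≤ d)
    (f : MvPolynomial (Fin (n + 1)) R) :
    (finSuccEquiv R n (homogeneousComponent d f)).coeff i =
      homogeneousComponent (d - i) ((finSuccEquiv R n f).coeff i) := by
  ext e
  rw [finSuccEquiv_coeff_coeff, coeff_homogeneousComponent, coeff_homogeneousComponent,
    Finsupp.degree_cons, finSuccEquiv_coeff_coeff]
  exact if_congr (by omega) rfl rfl

theorem coeff_finSuccEquiv_homogeneousComponent_of_lt {d i : ℕ} (hdi : d < i)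
    (f : MvPolynomial (Fin (n + 1)) R) :
    (finSuccEquiv R n (homogeneousComponent d f)).coeff i = 0 := by
  ext e
  rw [finSuccEquiv_coeff_coeff, coeff_homogeneousComponent, Finsupp.degree_cons,
    if_neg (by omega), coeff_zero]

variable (R n) in
noncomputable def finSuccCoeff (i : ℕ) :
    MvPolynomial (Fin (n + 1)) R →ₗ[R] MvPolynomial (Fin n) R :=
  (Polynomial.lcoeff _ i).restrictScalars R ∘ₗ (finSuccEquiv R n).toLinearMap

@[simp] theorem finSuccCoeff_apply (i : ℕ) (f : MvPolynomial (Fin (n + 1)) R) :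
    finSuccCoeff R n i f = (finSuccEquiv R n f).coeff i := rfl

variable (R n) in
noncomputable def finSuccDegreeLT (i : ℕ) : Submodule R (MvPolynomial (Fin (n + 1)) R) :=
  ((Polynomial.degreeLT _ i).restrictScalars R).comap (finSuccEquiv R n).toLinearMap

theorem mem_finSuccDegreeLT {i : ℕ} {f : MvPolynomial (Fin (n + 1)) R} :
    f ∈ finSuccDegreeLT R n i ↔ ∀ j, i ≤ j → (finSuccEquiv R n f).coeff j = 0 := by
  rw [finSuccDegreeLT, Submodule.mem_comap, AlgEquiv.toLinearMap_apply,
    Submodule.restrictScalars_mem, Polynomial.mem_degreeLT,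
    Polynomial.degree_lt_iff_coeff_zero]

theorem mem_finSuccDegreeLT_succ {i : ℕ} {f : MvPolynomial (Fin (n + 1)) R} :
    f ∈ finSuccDegreeLT R n (i + 1) ↔ (finSuccEquiv R n f).natDegree ≤ i := by
  rw [mem_finSuccDegreeLT, Polynomial.natDegree_le_iff_coeff_eq_zero]
  rfl

theorem finSuccDegreeLT_zero : finSuccDegreeLT R n 0 = ⊥ := by
  ext f
  rw [mem_finSuccDegreeLT, Submodule.mem_bot, ← map_eq_zero_iff _ (finSuccEquiv R n).injective,
    Polynomial.ext_iff]
  simp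

theorem finSuccDegreeLT_succ_inf_ker (i : ℕ) :
    finSuccDegreeLT R n (i + 1) ⊓ LinearMap.ker (finSuccCoeff R n i) = finSuccDegreeLT R n i := by
  ext f
  simp only [Submodule.mem_inf, LinearMap.mem_ker, finSuccCoeff_apply, mem_finSuccDegreeLT]
  refine ⟨fun ⟨hlt, hi⟩ j hj => (eq_or_lt_of_le hj).elim (· ▸ hi) (hlt j), fun h => ?_⟩
  exact ⟨fun j hj => h j (by omega), h i le_rfl⟩

theorem homogeneousSubmodule_le_finSuccDegreeLT (m : ℕ) :
    homogeneousSubmodule (Fin (n + 1)) R m ≤ finSuccDegreeLT R n (m + 1) := by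
  intro f hf
  rw [mem_finSuccDegreeLT]
  intro j hj
  rw [← (homogeneousComponent_of_mem hf).trans (if_pos rfl)]
  exact coeff_finSuccEquiv_homogeneousComponent_of_lt (by omega) f

theorem homogeneousComponent_mem_finSuccDegreeLT {i : ℕ} {f : MvPolynomial (Fin (n + 1)) R}
    (hf : f ∈ finSuccDegreeLT R n i) (d : ℕ) :
    homogeneousComponent d f ∈ finSuccDegreeLT R n i := by
  rw [mem_finSuccDegreeLT] at hf ⊢
  intro j hij
  rcases le_or_gt j d with hjd | hdj
  · rw [coeff_finSuccEquiv_homogeneousComponent hjd, hf j hij, map_zero]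
  · exact coeff_finSuccEquiv_homogeneousComponent_of_lt hdj f

theorem map_finSuccCoeff_homogeneousSubmodule_inf {V : Submodule R (MvPolynomial (Fin (n + 1)) R)}
    (hV : ∀ f ∈ V, ∀ d : ℕ, homogeneousComponent d f ∈ V) {m i : ℕ} (him : i ≤ m) :
    (homogeneousSubmodule (Fin (n + 1)) R m ⊓ V ⊓ finSuccDegreeLT R n (i + 1)).map
        (finSuccCoeff R n i) =
      homogeneousSubmodule (Fin n) R (m - i) ⊓
        (V ⊓ finSuccDegreeLT R n (i + 1)).map (finSuccCoeff R n i) := by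
  apply le_antisymm
  · rintro q ⟨f, ⟨⟨hfm, hfV⟩, hfi⟩, rfl⟩
    exact ⟨(hfm : f.IsHomogeneous m).finSuccEquiv_coeff_isHomogeneous i (m - i) (by omega),
      f, ⟨hfV, hfi⟩, rfl⟩
  · rintro q ⟨hqm, f, ⟨hfV, hfi⟩, rfl⟩
    refine ⟨homogeneousComponent m f, ⟨⟨homogeneousComponent_mem m f, hV f hfV m⟩,
      homogeneousComponent_mem_finSuccDegreeLT hfi m⟩, ?_⟩
    rw [finSuccCoeff_apply, coeff_finSuccEquiv_homogeneousComponent him]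
    exact (homogeneousComponent_of_mem hqm).trans (if_pos rfl)

end FinSucc

end MvPolynomial

open Module

theorem finrank_homogeneousSubmodule_inf_eq_sum {V : Submodule k (MvPolynomial (Fin (r + 1)) k)}
    (hV : ∀ f ∈ V, ∀ d : ℕ, homogeneousComponent d f ∈ V) (m : ℕ) :
    finrank k (homogeneousSubmodule (Fin (r + 1)) k m ⊓ V : Submodule k _) =
      ∑ i ∈ Finset.range (m + 1), finrank k (homogeneousSubmodule (Fin r) k (m - i) ⊓
        (V ⊓ finSuccDegreeLT k r (i + 1)).map (finSuccCoeff k r i) : Submodule k _) := by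
  set W := homogeneousSubmodule (Fin (r + 1)) k m ⊓ V
  have hW : W ⊓ finSuccDegreeLT k r (m + 1) = W :=
    inf_eq_left.mpr (inf_le_left.trans (homogeneousSubmodule_le_finSuccDegreeLT m))
  rw [← hW, Submodule.finrank_inf_eq_sum_finrank_map _ _ finSuccDegreeLT_zero
    finSuccDegreeLT_succ_inf_ker]
  refine Finset.sum_congr rfl fun i hi => ?_
  rw [map_finSuccCoeff_homogeneousSubmodule_inf hV (Nat.lt_succ_iff.mp (Finset.mem_range.mp hi))]

theorem map_finSuccCoeff_finSuccDegreeLT (i : ℕ) :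
    (finSuccDegreeLT k r (i + 1)).map (finSuccCoeff k r i) = ⊤ := by
  refine eq_top_iff.mpr fun q _ => ?_
  refine ⟨(finSuccEquiv k r).symm (Polynomial.C q * Polynomial.X ^ i),
    mem_finSuccDegreeLT_succ.mpr ?_, ?_⟩
  · rw [AlgEquiv.apply_symm_apply]
    exact (Polynomial.natDegree_C_mul_le _ _).trans (Polynomial.natDegree_X_pow_le _)
  · rw [finSuccCoeff_apply, AlgEquiv.apply_symm_apply, Polynomial.coeff_C_mul_X_pow, if_pos rfl]

theorem finrank_homogeneousSubmodule_eq_sum (m : ℕ) :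
    finrank k (homogeneousSubmodule (Fin (r + 1)) k m) =
      ∑ i ∈ Finset.range (m + 1), finrank k (homogeneousSubmodule (Fin r) k (m - i)) := by
  have h := finrank_homogeneousSubmodule_inf_eq_sum
    (V := (⊤ : Submodule k (MvPolynomial (Fin (r + 1)) k))) (fun _ _ _ => trivial) m
  rw [inf_top_eq] at h
  rw [h]
  refine Finset.sum_congr rfl fun i _ => ?_
  rw [top_inf_eq, map_finSuccCoeff_finSuccDegreeLT, inf_top_eq]

theorem mem_pelIdeal_iff {I : Ideal (MvPolynomial (Fin (r + 1)) k)} {i : ℕ}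
    {q : MvPolynomial (Fin r) k} :
    q ∈ pelIdeal I i ↔ ∃ f ∈ I, (finSuccEquiv k r f).natDegree ≤ i ∧
      (finSuccEquiv k r f).coeff i = q := by
  refine ⟨fun hq => ?_, fun hq => Ideal.subset_span hq⟩
  induction hq using Submodule.span_induction with
  | mem q hq => exact hq
  | zero => exact ⟨0, I.zero_mem, by simp⟩
  | add p q _ _ hp hq =>
    obtain ⟨f, hfI, hfi, rfl⟩ := hp
    obtain ⟨g, hgI, hgi, rfl⟩ := hq
    refine ⟨f + g, I.add_mem hfI hgI, ?_, by simp⟩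
    rw [map_add]
    exact (Polynomial.natDegree_add_le _ _).trans (max_le hfi hgi)
  | smul a q _ hq =>
    obtain ⟨f, hfI, hfi, rfl⟩ := hq
    refine ⟨(finSuccEquiv k r).symm (Polynomial.C a) * f, I.mul_mem_left _ hfI, ?_, ?_⟩
    · rw [map_mul, AlgEquiv.apply_symm_apply]
      exact (Polynomial.natDegree_C_mul_le _ _).trans hfi
    · rw [map_mul, AlgEquiv.apply_symm_apply, Polynomial.coeff_C_mul, smul_eq_mul]

theorem restrictScalars_pelIdeal (I : Ideal (MvPolynomial (Fin (r + 1)) k)) (i : ℕ) :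
    (pelIdeal I i).restrictScalars k =
      (I.restrictScalars k ⊓ finSuccDegreeLT k r (i + 1)).map (finSuccCoeff k r i) := by
  ext q
  rw [Submodule.restrictScalars_mem, mem_pelIdeal_iff]
  simp [mem_finSuccDegreeLT_succ, and_assoc]

/-- For a homogeneous ideal `I ⊆ k[x₀,…,x_r]` and every
`m ≥ 0`, `dim_k (R/I)_m = ∑_{i=0}^{∞} dim_k (k[x₁,…,x_r]/K_i(I))_{m-i}`;
the sum is finite since the terms vanish for `i > m`, so it is written as a
sum over `0 ≤ i ≤ m`. -/
theorem hilbFn_decomposition (I : Ideal (MvPolynomial (Fin (r + 1)) k))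
    (hI : ∀ f ∈ I, ∀ n : ℕ, homogeneousComponent n f ∈ I) :
    ∀ m : ℕ, hilbFn (r + 1) I m =
      ∑ i ∈ Finset.range (m + 1), hilbFn r (pelIdeal I i) (m - i) := by
  intro m
  simp only [hilbFn]
  rw [finrank_homogeneousSubmodule_eq_sum, finrank_homogeneousSubmodule_inf_eq_sum hI,
    ← Finset.sum_tsub_distrib _ fun i _ => Submodule.finrank_mono inf_le_left]
  refine Finset.sum_congr rfl fun i _ => ?_
  rw [restrictScalars_pelIdeal]
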